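/- arXiv:2208.04100 — 2 statements merged into one kernel-verified Lean document; each statement's English description precedes it below -/
import Mathlib

section
/- Let E be a finite-dimensional complex inner product space and let A : ℝ → End(E) be a family of linear operators that is differentiable at 0, such that A(0) is a normal operator. Let μ₀ be an eigenvalue of A(0) of algebraic multiplicity one with unit eigenvector X. Suppose μ : ℝ → ℂ is continuous at 0 with μ(0) = μ₀ and μ(ε) is an eigenvalue of A(ε) for all ε in a neighborhood of 0. Then μ is differentiable at 0 and μ'(0) = ⟨X, A'(0)(X)⟩, where A'(0) is the derivative of A at 0. -/
/-!
Since `A 0` is normal, `X` is also an eigenvector of its adjoint, with eigenvalue `conj μ₀`, so a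
unit eigenvector `v ε` of `A ε` satisfies
`(μ ε - μ₀) ⟪X, v ε⟫ = ⟪X, (A ε - A 0) v ε⟫ = ε ⟪X, A' v ε⟫ + o(ε)`.
Because `μ₀` is simple, `A 0 - μ₀` is bounded below on `Xᗮ`, so the component of `v ε` orthogonal
to `X` is `O(‖A ε - A 0‖ + ‖μ ε - μ₀‖)`, which tends to `0`. Hence
`⟪X, A' v ε⟫ = ⟪X, v ε⟫ ⟪X, A' X⟫ + o(1)` and `‖⟪X, v ε⟫‖ → 1`, and dividing by `⟪X, v ε⟫` gives
`μ ε - μ₀ = ε ⟪X, A' X⟫ + o(ε)`.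
-/

section

open scoped InnerProductSpace
open Filter Topology Asymptotics ContinuousLinearMap

theorem Asymptotics.IsLittleO.of_mul_of_le_norm {α 𝕜 F : Type*} [NormedDivisionRing 𝕜] [Norm F]
    {l : Filter α} {c f : α → 𝕜} {g : α → F} {δ : ℝ} (hδ : 0 < δ)
    (hc : ∀ᶠ x in l, δ ≤ ‖c x‖) (h : (fun x => c x * f x) =o[l] g) : f =o[l] g := by
  refine (IsBigO.of_bound δ⁻¹ ?_).trans_isLittleO h
  filter_upwards [hc] with x hx
  rw [norm_mul, le_inv_mul_iff₀ hδ]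
  exact mul_le_mul_of_nonneg_right hx (norm_nonneg _)

theorem LinearMap.exists_norm_starProjection_orthogonal_ker_le {𝕜 E F : Type*} [RCLike 𝕜]
    [NormedAddCommGroup E] [InnerProductSpace 𝕜 E] [FiniteDimensional 𝕜 E]
    [NormedAddCommGroup F] [NormedSpace 𝕜 F] (f : E →ₗ[𝕜] F) :
    ∃ K : ℝ, ∀ v, ‖(LinearMap.ker f)ᗮ.starProjection v‖ ≤ K * ‖f v‖ := by
  set W := (LinearMap.ker f)ᗮ
  have hinj : LinearMap.ker (f ∘ₗ W.subtype) = ⊥ := by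
    rw [LinearMap.ker_comp, ← Submodule.disjoint_iff_comap_eq_bot]
    exact (Submodule.orthogonal_disjoint _).symm
  obtain ⟨K, -, hK⟩ := (f ∘ₗ W.subtype).exists_antilipschitzWith hinj
  refine ⟨K, fun v => ?_⟩
  have hfv : f (W.starProjection v) = f v := by
    rw [Submodule.starProjection_orthogonal_val, map_sub,
      LinearMap.mem_ker.mp (Submodule.starProjection_apply_mem _ v), sub_zero]
  simpa [hfv, -Submodule.starProjection_orthogonal_val] using
    hK.le_mul_norm (map_zero _) (W.orthogonalProjectionOnto v)

theorem ContinuousLinearMap.IsStarNormal.adjoint_apply_eq_conj_smul {𝕜 E : Type*} [RCLike 𝕜]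
    [NormedAddCommGroup E] [InnerProductSpace 𝕜 E] [CompleteSpace E] {T : E →L[𝕜] E}
    (hT : IsStarNormal T) {μ : 𝕜} {x : E} (hx : T x = μ • x) :
    adjoint T x = starRingEnd 𝕜 μ • x := by
  have hscalar : IsStarNormal (algebraMap 𝕜 (E →L[𝕜] E) μ) :=
    ⟨Algebra.commute_algebraMap_right _ _⟩
  have hshift : IsStarNormal (T - algebraMap 𝕜 _ μ) :=
    (algebraMap_star_comm μ (A := E →L[𝕜] E) ▸
      Algebra.commute_algebraMap_right _ _).isStarNormal_sub
  have h := (hshift.adjoint_apply_eq_zero_iff x).mpr (by simp [hx])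
  rw [← star_eq_adjoint, star_sub, ← algebraMap_star_comm, star_eq_adjoint] at h
  simpa [sub_eq_zero] using h

theorem Module.End.eigenspace_eq_span_singleton_of_finrank_maxGenEigenspace_eq_one
    {K V : Type*} [Field K] [AddCommGroup V] [Module K V] [FiniteDimensional K V]
    {f : Module.End K V} {μ : K} (hf : Module.finrank K (f.maxGenEigenspace μ) = 1)
    {x : V} (hx : f x = μ • x) (hx0 : x ≠ 0) :
    f.eigenspace μ = K ∙ x := by
  have hle : (K ∙ x) ≤ f.eigenspace μ :=
    (Submodule.span_singleton_le_iff_mem _ _).mpr (Module.End.mem_eigenspace_iff.mpr hx)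
  refine (Submodule.eq_of_le_of_finrank_le hle ?_).symm
  rw [finrank_span_singleton hx0, ← hf]
  exact Submodule.finrank_mono Module.End.eigenspace_le_maxGenEigenspace

theorem Module.End.HasEigenvalue.exists_norm_eq_one_apply_eq_smul {𝕜 E : Type*} [RCLike 𝕜]
    [NormedAddCommGroup E] [NormedSpace 𝕜 E] {f : Module.End 𝕜 E} {μ : 𝕜}
    (h : f.HasEigenvalue μ) : ∃ u : E, ‖u‖ = 1 ∧ f u = μ • u := by
  obtain ⟨u, hu⟩ := h.exists_hasEigenvector
  refine ⟨(‖u‖⁻¹ : 𝕜) • u, norm_smul_inv_norm hu.2, ?_⟩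
  rw [map_smul, hu.apply_eq_smul, smul_comm]

theorem inner_sub_apply_eq_sub_mul_inner {𝕜 E : Type*} [RCLike 𝕜]
    [NormedAddCommGroup E] [InnerProductSpace 𝕜 E] [CompleteSpace E] {S T : E →L[𝕜] E}
    {X v : E} {μ ν : 𝕜} (hX : adjoint T X = starRingEnd 𝕜 μ • X) (hv : S v = ν • v) :
    ⟪X, (S - T) v⟫_𝕜 = (ν - μ) * ⟪X, v⟫_𝕜 := by
  rw [sub_apply, inner_sub_right, hv, ← adjoint_inner_left, hX, inner_smul_left,
    inner_smul_right, RCLike.conj_conj, sub_mul]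

variable {E : Type*} [NormedAddCommGroup E] [InnerProductSpace ℂ E]

theorem tendsto_apply_eigenvector_of_norm_le {A : ℝ → E →L[ℂ] E} {μ : ℝ → ℂ} {v : ℝ → E}
    (hA : ContinuousAt A 0) (hμ : ContinuousAt μ 0)
    (hv : ∀ᶠ ε in 𝓝 0, ‖v ε‖ = 1 ∧ A ε (v ε) = μ ε • v ε)
    {P : E → E} {K : ℝ} (hP : ∀ w, ‖P w‖ ≤ K * ‖A 0 w - μ 0 • w‖) :
    Tendsto (fun ε => P (v ε)) (𝓝 0) (𝓝 0) := by
  have hδ : Tendsto (fun ε => ‖A ε - A 0‖ + ‖μ ε - μ 0‖) (𝓝 0) (𝓝 0) := by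
    simpa using ((hA.sub_const (A 0)).norm.add (hμ.sub_const (μ 0)).norm)
  have hres : Tendsto (fun ε => A 0 (v ε) - μ 0 • v ε) (𝓝 0) (𝓝 0) := by
    refine squeeze_zero_norm' ?_ hδ
    filter_upwards [hv] with ε ⟨hv1, hv2⟩
    have hsplit : A 0 (v ε) - μ 0 • v ε = (A 0 - A ε) (v ε) + (μ ε - μ 0) • v ε := by
      rw [sub_apply, hv2, sub_smul]; abel
    calc ‖A 0 (v ε) - μ 0 • v ε‖ ≤ ‖(A 0 - A ε) (v ε)‖ + ‖(μ ε - μ 0) • v ε‖ :=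
          hsplit ▸ norm_add_le _ _
      _ ≤ ‖A 0 - A ε‖ * ‖v ε‖ + ‖μ ε - μ 0‖ * ‖v ε‖ :=
          add_le_add ((A 0 - A ε).le_opNorm _) (norm_smul _ _).le
      _ = ‖A ε - A 0‖ + ‖μ ε - μ 0‖ := by rw [hv1, mul_one, mul_one, norm_sub_rev]
  exact squeeze_zero_norm (fun ε => hP (v ε)) (by simpa using hres.norm.const_mul K)

theorem hasDerivAt_eigenvalue_of_tendsto_orthogonal_component [CompleteSpace E]
    {A : ℝ → E →L[ℂ] E} {A' : E →L[ℂ] E} (hA : HasDerivAt A A' 0) {μ : ℝ → ℂ} {X : E}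
    (hX : ‖X‖ = 1) (hadj : adjoint (A 0) X = starRingEnd ℂ (μ 0) • X) {v : ℝ → E}
    (hv : ∀ᶠ ε in 𝓝 0, ‖v ε‖ = 1 ∧ A ε (v ε) = μ ε • v ε)
    (hp : Tendsto (fun ε => v ε - ⟪X, v ε⟫_ℂ • X) (𝓝 0) (𝓝 0)) :
    HasDerivAt μ ⟪X, A' X⟫_ℂ 0 := by
  set c : ℝ → ℂ := fun ε => ⟪X, v ε⟫_ℂ
  set p : ℝ → E := fun ε => v ε - c ε • X
  have hc : ∀ᶠ ε in 𝓝 0, 1 / 2 ≤ ‖c ε‖ := by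
    have hp_small : ∀ᶠ ε in 𝓝 0, ‖p ε‖ < 1 / 2 :=
      (tendsto_zero_iff_norm_tendsto_zero.mp hp).eventually (eventually_lt_nhds (by norm_num))
    filter_upwards [hv, hp_small] with ε hvε hpε
    have : ‖c ε‖ = ‖v ε - p ε‖ := by simp [p, norm_smul, hX]
    linarith [norm_sub_norm_le (v ε) (p ε), hvε.1]
  have hrem : (fun ε : ℝ => A ε - A 0 - ε • A') =o[𝓝 0] fun ε => ε := by
    simpa using hasDerivAt_iff_isLittleO.mp hA
  have h₁ : (fun ε => ⟪X, (A ε - A 0 - ε • A') (v ε)⟫_ℂ) =o[𝓝 0] fun ε => ε := by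
    refine (IsBigO.of_bound 1 ?_).trans_isLittleO hrem
    filter_upwards [hv] with ε hvε
    calc ‖⟪X, (A ε - A 0 - ε • A') (v ε)⟫_ℂ‖ ≤ ‖(A ε - A 0 - ε • A') (v ε)‖ :=
          (norm_inner_le_norm (𝕜 := ℂ) X _).trans_eq (by rw [hX, one_mul])
      _ ≤ ‖A ε - A 0 - ε • A'‖ * ‖v ε‖ := (A ε - A 0 - ε • A').le_opNorm (v ε)
      _ = 1 * ‖A ε - A 0 - ε • A'‖ := by rw [hvε.1, mul_one, one_mul]
  have h₂ : (fun ε : ℝ => ε • ⟪X, A' (p ε)⟫_ℂ) =o[𝓝 0] fun ε => ε := by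
    have : Tendsto (fun ε => ⟪X, A' (p ε)⟫_ℂ) (𝓝 0) (𝓝 0) := by
      simpa using tendsto_const_nhds.inner (𝕜 := ℂ) (f := fun _ : ℝ => X)
        ((A'.continuous.tendsto 0).comp hp)
    simpa using (isBigO_refl (fun ε : ℝ => ε) (𝓝 0)).smul_isLittleO
      (isLittleO_one_iff ℝ |>.mpr this)
  have hid : ∀ᶠ ε in 𝓝 0, c ε * (μ ε - μ 0 - ε • ⟪X, A' X⟫_ℂ) =
      ⟪X, (A ε - A 0 - ε • A') (v ε)⟫_ℂ + ε • ⟪X, A' (p ε)⟫_ℂ := by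
    filter_upwards [hv] with ε hvε
    have hsub := inner_sub_apply_eq_sub_mul_inner hadj hvε.2
    simp only [sub_apply, smul_apply, inner_sub_right] at hsub ⊢
    simp only [p, c, map_sub, map_smul, ← Complex.coe_smul, inner_sub_right,
      inner_smul_right]
    linear_combination -hsub
  rw [hasDerivAt_iff_isLittleO]
  simp only [sub_zero]
  exact ((h₁.add h₂).congr' (hid.mono fun ε h => h.symm) EventuallyEq.rfl).of_mul_of_le_norm
    (by norm_num) hc

end

open scoped InnerProductSpace
open Filter Topology

/-- First-order perturbation of a simple eigenvalue. Let `E` be a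
finite-dimensional complex inner product space and `A : ℝ → End(E)` a family of
operators that is differentiable at `0` (with derivative `A'`), such that `A 0` is a
normal operator. Let `μ₀` be an eigenvalue of `A 0` of algebraic multiplicity one
(the maximal generalized eigenspace is one-dimensional) with unit eigenvector `X`.
If `μ : ℝ → ℂ` is continuous at `0`, `μ 0 = μ₀`, and `μ ε` is an eigenvalue of `A ε`
for all `ε` in a neighborhood of `0`, then `μ` is differentiable at `0` with
`μ'(0) = ⟨X, A'(0) X⟩`. -/
theorem simple_eigenvalue_first_order_perturbation
    {E : Type*} [NormedAddCommGroup E] [InnerProductSpace ℂ E] [FiniteDimensional ℂ E]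
    (A : ℝ → (E →L[ℂ] E)) (A' : E →L[ℂ] E) (hA : HasDerivAt A A' 0)
    (hnormal : IsStarNormal (A 0))
    (μ₀ : ℂ) (X : E) (hXunit : ‖X‖ = 1) (hXeig : (A 0) X = μ₀ • X)
    (hmult : Module.finrank ℂ
      (Module.End.maxGenEigenspace ((A 0 : E →L[ℂ] E) : E →ₗ[ℂ] E) μ₀) = 1)
    (μ : ℝ → ℂ) (hcont : ContinuousAt μ 0) (hμ0 : μ 0 = μ₀)
    (heig : ∀ᶠ ε in nhds 0,
      Module.End.HasEigenvalue ((A ε : E →L[ℂ] E) : E →ₗ[ℂ] E) (μ ε)) :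
    HasDerivAt μ (inner ℂ X (A' X) : ℂ) 0 := by
  have hX0 : X ≠ 0 := norm_ne_zero_iff.mp (by rw [hXunit]; exact one_ne_zero)
  choose v hv_of_eig using fun ε => (em (Module.End.HasEigenvalue (A ε : E →ₗ[ℂ] E) (μ ε))).elim
    (fun h => h.exists_norm_eq_one_apply_eq_smul.imp fun _ hu _ => hu)
    (fun h => ⟨0, fun h' => (h h').elim⟩)
  have hv : ∀ᶠ ε in 𝓝 0, ‖v ε‖ = 1 ∧ A ε (v ε) = μ ε • v ε := heig.mono hv_of_eig
  have hker : LinearMap.ker ((A 0 : E →ₗ[ℂ] E) - μ₀ • 1) = ℂ ∙ X := by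
    rw [← Module.End.eigenspace_def]
    exact Module.End.eigenspace_eq_span_singleton_of_finrank_maxGenEigenspace_eq_one
      hmult hXeig hX0
  obtain ⟨K, hK⟩ := ((A 0 : E →ₗ[ℂ] E) - μ₀ • 1).exists_norm_starProjection_orthogonal_ker_le
  rw [hker] at hK
  have hp := tendsto_apply_eigenvector_of_norm_le hA.continuousAt hcont hv
    (P := (ℂ ∙ X)ᗮ.starProjection) fun w => by simpa [hμ0] using hK w
  simp only [Submodule.starProjection_orthogonal_val,
    Submodule.starProjection_unit_singleton ℂ hXunit] at hp
  exact hasDerivAt_eigenvalue_of_tendsto_orthogonal_component hA hXunit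
    (hμ0 ▸ ContinuousLinearMap.IsStarNormal.adjoint_apply_eq_conj_smul hnormal hXeig) hv hp
end

section
/- Let U = ∑_a e^{iλ_a}|φ_a⟩⟨φ_a| be a unitary operator on ℂ^d with {|φ_a⟩} an orthonormal basis and λ_a ∈ ℝ, and let 𝒰(ρ) = UρU† be the associated unitary channel on d×d complex matrices. Fix indices a, b and suppose μ₀ = e^{i(λ_a−λ_b)} is an eigenvalue of 𝒰 of algebraic multiplicity one. For each ε ∈ ℝ let ℰ_ε(ρ) = ∑_{k=1}^m E_k(ε) ρ E_k(ε) where each matrix E_k(ε) is Hermitian, each map ε ↦ E_k(ε) is differentiable at 0, and ℰ_0 is the identity map. Suppose μ : ℝ → ℂ is continuous at 0 with μ(0) = μ₀ and μ(ε) is an eigenvalue of the noisy channel ℰ_ε ∘ 𝒰 for all ε in a neighborhood of 0. Then μ is differentiable at 0 and μ'(0) = r·μ₀ for some real number r; in particular Im(μ'(0)/μ(0)) = 0, so the phase λ_a − λ_b of the eigenvalue is unchanged to first order in the noise strength ε. -/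
/-!
In the basis `|φ_p⟩⟨φ_q|` of `d × d` matrices the unitary channel is diagonal, with entries
`e^{i(λ_p - λ_q)}`, so the matrix `A ε` of the noisy channel is entrywise differentiable at `0`
with `A 0` this diagonal matrix. As `μ₀` is a simple diagonal entry, the characteristic
polynomial `(ε, z) ↦ det (z - A ε)` has nonvanishing `z`-derivative at `(0, μ₀)`, and the
implicit-function estimate shows that any continuous eigenvalue branch through `μ₀` has the
same derivative at `0` as the diagonal entry `A_{(a,b),(a,b)}`. That entry is
`μ₀ · ∑ₖ tr (Φ† E_k Φ E_k)` with `Φ = |φ_a⟩⟨φ_b|`, and every such trace is real because `E_k` is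
Hermitian.
-/

open Matrix Asymptotics Filter Topology Finset

theorem hasDerivAt_of_eventually_eq_zero {F : ℝ × ℂ → ℂ} {L : ℝ × ℂ →L[ℝ] ℂ} {μ : ℝ → ℂ}
    {t₀ : ℝ} {β c : ℂ} (hF : HasFDerivAt F L (t₀, μ t₀))
    (hL : ∀ e w, L (e, w) = c * (w - e • β)) (hc : c ≠ 0) (hμ : ContinuousAt μ t₀)
    (hroot : ∀ᶠ t in 𝓝 t₀, F (t, μ t) = 0) :
    HasDerivAt μ β t₀ := by
  set g : ℝ → ℝ × ℂ := fun t => (t, μ t)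
  set r : ℝ → ℂ := fun t => μ t - μ t₀ - (t - t₀) • β
  have hg : Tendsto g (𝓝 t₀) (𝓝 (g t₀)) := (continuousAt_id.prodMk hμ).tendsto
  have hFg : (fun t => c * r t) =o[𝓝 t₀] (fun t => g t - g t₀) := by
    refine ((hF.isLittleO.comp_tendsto hg).neg_left).congr' ?_ (.refl _ _)
    filter_upwards [hroot] with t ht
    simp [g, r, ht, hroot.self_of_nhds, hL, Prod.sub_def]
  have hr : r =o[𝓝 t₀] (fun t => g t - g t₀) := by
    simpa [← mul_assoc, hc] using hFg.const_mul_left c⁻¹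
  -- `g t - g t₀` is its linear part `(t - t₀, (t - t₀) • β)` plus the negligible error `r t`
  have hgO : (fun t => g t - g t₀) =O[𝓝 t₀] (fun t => t - t₀) := by
    have hr' : (fun t => ((0 : ℝ), -r t)) =o[𝓝 t₀] (fun t => g t - g t₀) :=
      isLittleO_norm_left.mp (hr.norm_left.congr_left fun t => by simp [Prod.norm_def])
    refine hr'.right_isBigO_add.trans ?_
    have hβ : (fun t : ℝ => (t - t₀) • β) =O[𝓝 t₀] (fun t => t - t₀) :=
      .of_bound ‖β‖ (.of_forall fun t => by rw [norm_smul, mul_comm])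
    refine ((isBigO_refl _ _).prod_left hβ).congr_left fun t => ?_
    simp [g, r]
  exact hasDerivAt_iff_isLittleO.mpr (hr.trans_isBigO hgO)

theorem HasDerivAt.ofReal_re_of_forall_im_eq_zero {f : ℝ → ℂ} {f' : ℂ} {x : ℝ}
    (hf : HasDerivAt f f' x) (him : ∀ t, (f t).im = 0) : HasDerivAt f (f'.re : ℂ) x := by
  have h := Complex.imCLM.hasFDerivAt.comp_hasDerivAt x hf
  simp only [Function.comp_def, Complex.imCLM_apply, him] at h
  refine hf.congr_deriv (Complex.ext rfl ?_)
  simpa using h.unique (hasDerivAt_const x 0)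

theorem Matrix.prod_erase_diagonal_perm_eq_zero {ι R : Type*} [Fintype ι] [DecidableEq ι]
    [CommMonoidWithZero R] {σ : Equiv.Perm ι} (hσ : σ ≠ 1) (g : ι → R) (i : ι) :
    ∏ j ∈ univ.erase i, diagonal g (σ j) j = 0 := by
  obtain ⟨k, hk⟩ : ∃ k, σ k ≠ k := by
    by_contra! h
    exact hσ (Equiv.ext h)
  -- `σ` moves both `k` and `σ k`, and at least one of them differs from `i`
  by_cases hki : k = i
  · subst hki
    refine prod_eq_zero (mem_erase.mpr ⟨hk, mem_univ _⟩) (diagonal_apply_ne _ ?_)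
    exact fun h => hk (σ.injective h)
  · exact prod_eq_zero (mem_erase.mpr ⟨hki, mem_univ _⟩) (diagonal_apply_ne _ hk)

theorem hasFDerivAt_det_of_eq_diagonal {𝕜 E ι 𝔸 : Type*} [NontriviallyNormedField 𝕜]
    [NormedAddCommGroup E] [NormedSpace 𝕜 E] [NormedCommRing 𝔸] [NormedAlgebra 𝕜 𝔸]
    [Fintype ι] [DecidableEq ι] {G : E → Matrix ι ι 𝔸} {D : ι → ι → E →L[𝕜] 𝔸} {x₀ : E}
    {g : ι → 𝔸} {i₀ : ι} (hG : ∀ i j, HasFDerivAt (fun x => G x i j) (D i j) x₀)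
    (hG₀ : G x₀ = diagonal g) (hg : g i₀ = 0) :
    HasFDerivAt (fun x => (G x).det) ((∏ i ∈ univ.erase i₀, g i) • D i₀ i₀) x₀ := by
  have hdet := HasFDerivAt.fun_sum (u := univ) fun (σ : Equiv.Perm ι) _ =>
    (HasFDerivAt.finsetProd (u := univ) fun (i : ι) _ => hG (σ i) i).const_mul
      ((Equiv.Perm.sign σ : ℤ) : 𝔸)
  simp only [← det_apply', hG₀] at hdet
  refine hdet.congr_fderiv ?_
  rw [sum_eq_single_of_mem 1 (mem_univ _) fun σ _ hσ => by
    ext; simp [prod_erase_diagonal_perm_eq_zero hσ]]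
  rw [sum_eq_single_of_mem i₀ (mem_univ _) fun i _ hi => by
    ext; simp [prod_eq_zero (mem_erase.mpr ⟨Ne.symm hi, mem_univ _⟩) (by simpa using hg)]]
  ext; simp

theorem Matrix.hasDerivAt_of_isRoot_charpoly {ι : Type*} [Fintype ι] [DecidableEq ι]
    {A : ℝ → Matrix ι ι ℂ} {g : ι → ℂ} {i₀ : ι} {μ : ℝ → ℂ} {t₀ : ℝ}
    (hA : ∀ i j, DifferentiableAt ℝ (fun t => A t i j) t₀) (hA₀ : A t₀ = diagonal g)
    (hsimple : ∀ i ≠ i₀, g i ≠ g i₀) (hμ : ContinuousAt μ t₀) (hμ₀ : μ t₀ = g i₀)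
    (hroot : ∀ᶠ t in 𝓝 t₀, (A t).charpoly.IsRoot (μ t)) :
    HasDerivAt μ (deriv (fun t => A t i₀ i₀) t₀) t₀ := by
  set D : ι → ι → ℝ × ℂ →L[ℝ] ℂ := fun i j =>
    (1 : Matrix ι ι ℂ) i j • ContinuousLinearMap.snd ℝ ℝ ℂ -
      (ContinuousLinearMap.toSpanSingleton ℝ (deriv (fun t => A t i j) t₀)).comp
        (ContinuousLinearMap.fst ℝ ℝ ℂ)
  have hD : ∀ i j, HasFDerivAt (fun x : ℝ × ℂ => (scalar ι x.2 - A x.1) i j) (D i j)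
      (t₀, μ t₀) := by
    intro i j
    have h := (hasFDerivAt_snd.const_mul ((1 : Matrix ι ι ℂ) i j)).sub
      ((hA i j).hasDerivAt.hasFDerivAt.comp (f := Prod.fst) (t₀, μ t₀) hasFDerivAt_fst)
    refine h.congr_of_eventuallyEq (.of_forall fun x => ?_)
    rcases eq_or_ne i j with rfl | hij <;> simp [*]
  have hG₀ : scalar ι (μ t₀) - A t₀ = diagonal fun i => g i₀ - g i := by
    rw [hA₀, hμ₀, scalar_apply, diagonal_sub]
  have hF := hasFDerivAt_det_of_eq_diagonal hD hG₀ (sub_self _)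
  refine hasDerivAt_of_eventually_eq_zero (F := fun x => (A x.1).charpoly.eval x.2)
    (c := ∏ i ∈ univ.erase i₀, (g i₀ - g i))
    (by simpa only [eval_charpoly] using hF) (fun e w => ?_) ?_ hμ hroot
  · simp [D, Complex.real_smul]
  · exact prod_ne_zero_iff.mpr fun i hi => sub_ne_zero.mpr (hsimple i (ne_of_mem_erase hi)).symm

theorem Matrix.differentiableAt_mul_apply {𝕜 𝔸 l m n : Type*} [NontriviallyNormedField 𝕜]
    [NormedRing 𝔸] [NormedAlgebra 𝕜 𝔸] [Fintype m] {X : 𝕜 → Matrix l m 𝔸}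
    {Y : 𝕜 → Matrix m n 𝔸} {t : 𝕜} (hX : ∀ i j, DifferentiableAt 𝕜 (fun s => X s i j) t)
    (hY : ∀ i j, DifferentiableAt 𝕜 (fun s => Y s i j) t) (i : l) (j : n) :
    DifferentiableAt 𝕜 (fun s => (X s * Y s) i j) t := by
  simp only [mul_apply]
  exact .fun_sum fun k _ => (hX i k).mul (hY k j)

theorem Matrix.differentiableAt_trace {𝕜 𝔸 n : Type*} [NontriviallyNormedField 𝕜]
    [NormedAddCommGroup 𝔸] [NormedSpace 𝕜 𝔸] [Fintype n] {X : 𝕜 → Matrix n n 𝔸} {t : 𝕜}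
    (hX : ∀ i j, DifferentiableAt 𝕜 (fun s => X s i j) t) :
    DifferentiableAt 𝕜 (fun s => trace (X s)) t :=
  .fun_sum fun i _ => hX i i

theorem Matrix.differentiableAt_trace_mul_mul_mul_mul {n : Type*} [Fintype n]
    {K : ℝ → Matrix n n ℂ} {t : ℝ} (hK : ∀ i j, DifferentiableAt ℝ (fun s => K s i j) t)
    (P C : Matrix n n ℂ) : DifferentiableAt ℝ (fun s => trace (P * (K s * C * K s))) t :=
  differentiableAt_trace <| differentiableAt_mul_apply (fun _ _ => differentiableAt_const _) <|
    differentiableAt_mul_apply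
      (differentiableAt_mul_apply hK fun _ _ => differentiableAt_const _) hK

theorem Matrix.IsHermitian.im_trace_conjTranspose_mul_mul_mul_self {n : Type*} [Fintype n]
    {F : Matrix n n ℂ} (hF : F.IsHermitian) (ρ : Matrix n n ℂ) :
    (trace (ρᴴ * (F * ρ * F))).im = 0 := by
  refine Complex.conj_eq_iff_im.mp ?_
  rw [← Complex.star_def, ← trace_conjTranspose, conjTranspose_mul, conjTranspose_mul,
    conjTranspose_mul, conjTranspose_conjTranspose, hF.eq]
  simp only [Matrix.mul_assoc]
  rw [trace_mul_comm]
  simp only [Matrix.mul_assoc]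

theorem Module.End.eq_of_finrank_maxGenEigenspace_eq_one {K V ι : Type*} [Field K]
    [AddCommGroup V] [Module K V] {f : End K V} {μ : K} (b : Basis ι K V)
    (hμ : finrank K (f.maxGenEigenspace μ) = 1) {i j : ι} (hi : f (b i) = μ • b i)
    (hj : f (b j) = μ • b j) : i = j := by
  have hmem : ∀ k, f (b k) = μ • b k → b k ∈ f.maxGenEigenspace μ := fun k hk =>
    eigenspace_le_maxGenEigenspace (mem_eigenspace_iff.mpr hk)
  obtain ⟨c, hc⟩ := (finrank_eq_one_iff_of_nonzero' ⟨b i, hmem i hi⟩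
    (by simpa using b.ne_zero i)).mp hμ ⟨b j, hmem j hj⟩
  by_contra hij
  simpa [Finsupp.single_apply, hij] using congrArg (fun v => b.repr v j) (congrArg Subtype.val hc)

theorem LinearMap.toMatrix_eq_diagonal {R M ι : Type*} [CommSemiring R] [AddCommMonoid M]
    [Module R M] [Fintype ι] [DecidableEq ι] {f : Module.End R M} (b : Module.Basis ι R M)
    {g : ι → R} (hf : ∀ i, f (b i) = g i • b i) : toMatrix b b f = diagonal g := by
  ext i j
  rcases eq_or_ne i j with rfl | hij
  · simp [toMatrix_apply, hf]
  · simp [toMatrix_apply, hf, hij]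

section KetBra

variable {n : Type*} [Fintype n] [DecidableEq n] (φ : n → n → ℂ)

noncomputable def ketBra (p : n × n) : Matrix n n ℂ := vecMulVec (φ p.1) (star (φ p.2))

variable {φ} (hortho : ∀ a b, star (φ a) ⬝ᵥ φ b = if a = b then 1 else 0)
include hortho

theorem trace_conjTranspose_ketBra_mul_ketBra (p q : n × n) :
    trace ((ketBra φ p)ᴴ * ketBra φ q) = if p = q then 1 else 0 := by
  simp only [ketBra, conjTranspose_vecMulVec, star_star, vecMulVec_mul_vecMulVec, hortho,
    trace_vecMulVec, dotProduct_comm (φ p.2), Prod.ext_iff, smul_dotProduct, smul_eq_mul,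
    ite_and, ite_mul, one_mul, zero_mul, @eq_comm _ q.2]

theorem linearIndependent_ketBra : LinearIndependent ℂ (ketBra φ) := by
  refine Fintype.linearIndependent_iff.mpr fun g hg p => ?_
  simpa [mul_sum, trace_sum, trace_conjTranspose_ketBra_mul_ketBra hortho] using
    congrArg (fun X => trace ((ketBra φ p)ᴴ * X)) hg

noncomputable def ketBraBasis : Module.Basis (n × n) ℂ (Matrix n n ℂ) :=
  basisOfLinearIndependentOfCardEqFinrank' _ (linearIndependent_ketBra hortho)
    (by rw [Module.finrank_matrix, Module.finrank_self, mul_one, Fintype.card_prod])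

@[simp]
theorem coe_ketBraBasis : ⇑(ketBraBasis hortho) = ketBra φ :=
  coe_basisOfLinearIndependentOfCardEqFinrank' ..

theorem ketBraBasis_repr_apply (X : Matrix n n ℂ) (p : n × n) :
    (ketBraBasis hortho).repr X p = trace ((ketBra φ p)ᴴ * X) := by
  refine Module.Basis.repr_apply_eq _ (fun X p => trace ((ketBra φ p)ᴴ * X)) ?_ ?_ ?_ X p
  · intro X Y; ext p; simp [mul_add]
  · intro c X; ext p; simp
  · intro q; ext p
    simp [trace_conjTranspose_ketBra_mul_ketBra hortho, Finsupp.single_apply, eq_comm]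

theorem mulVec_eq_smul_of_eq_sum {U : Matrix n n ℂ} {e : n → ℂ}
    (hU : U = ∑ a, e a • vecMulVec (φ a) (star (φ a))) (c : n) :
    U *ᵥ φ c = e c • φ c := by
  simp [hU, sum_mulVec, smul_mulVec, vecMulVec_mulVec, hortho]

theorem mul_ketBra_mul_conjTranspose {U : Matrix n n ℂ} {e : n → ℂ}
    (hU : U = ∑ a, e a • vecMulVec (φ a) (star (φ a))) (p : n × n) :
    U * ketBra φ p * Uᴴ = (e p.1 * star (e p.2)) • ketBra φ p := by
  rw [ketBra, mul_vecMulVec, vecMulVec_mul, ← star_mulVec, mulVec_eq_smul_of_eq_sum hortho hU,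
    mulVec_eq_smul_of_eq_sum hortho hU]
  ext i j
  simp only [star_smul, RCLike.star_def, vecMulVec_apply, Pi.smul_apply, smul_eq_mul,
    Pi.star_apply, Matrix.smul_apply]
  ring

theorem toMatrix_ketBraBasis_apply_of_kraus {ι : Type*} [Fintype ι] {U : Matrix n n ℂ}
    {e : n → ℂ} (hU : U = ∑ a, e a • vecMulVec (φ a) (star (φ a)))
    {N : Module.End ℂ (Matrix n n ℂ)} {K : ι → Matrix n n ℂ}
    (hN : ∀ ρ, N ρ = ∑ k, K k * (U * ρ * Uᴴ) * K k) (p q : n × n) :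
    LinearMap.toMatrix (ketBraBasis hortho) (ketBraBasis hortho) N p q =
      (∑ k, trace ((ketBra φ p)ᴴ * (K k * ketBra φ q * K k))) * (e q.1 * star (e q.2)) := by
  simp [LinearMap.toMatrix_apply, ketBraBasis_repr_apply, hN,
    mul_ketBra_mul_conjTranspose hortho hU, sum_mul, mul_comm]

end KetBra

theorem hermitian_kraus_noise_keeps_phase_to_first_order_general
    {d m : ℕ}
    (U : Matrix (Fin d) (Fin d) ℂ)
    (φ : Fin d → (Fin d → ℂ)) (lam : Fin d → ℝ)
    (hortho : ∀ a b : Fin d, star (φ a) ⬝ᵥ φ b = if a = b then 1 else 0)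
    (hspec : U = ∑ a : Fin d,
      Complex.exp (Complex.I * (lam a : ℂ)) • vecMulVec (φ a) (star (φ a)))
    (a b : Fin d) (μ₀ : ℂ)
    (hμ₀ : μ₀ = Complex.exp (Complex.I * ((lam a : ℂ) - (lam b : ℂ))))
    (𝒰 : Module.End ℂ (Matrix (Fin d) (Fin d) ℂ))
    (h𝒰 : ∀ ρ, 𝒰 ρ = U * ρ * Uᴴ)
    (hmult : Module.finrank ℂ (Module.End.maxGenEigenspace 𝒰 μ₀) = 1)
    (E : Fin m → ℝ → Matrix (Fin d) (Fin d) ℂ)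
    (hherm : ∀ k ε, (E k ε)ᴴ = E k ε)
    (hdiff : ∀ k (i j : Fin d), DifferentiableAt ℝ (fun ε => E k ε i j) 0)
    (hE0 : ∀ ρ : Matrix (Fin d) (Fin d) ℂ, ∑ k : Fin m, E k 0 * ρ * E k 0 = ρ)
    (N : ℝ → Module.End ℂ (Matrix (Fin d) (Fin d) ℂ))
    (hN : ∀ ε ρ, N ε ρ = ∑ k : Fin m, E k ε * (U * ρ * Uᴴ) * E k ε)
    (μ : ℝ → ℂ) (hcont : ContinuousAt μ 0) (hμ0 : μ 0 = μ₀)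
    (heig : ∀ᶠ ε in nhds 0, Module.End.HasEigenvalue (N ε) (μ ε)) :
    ∃ r : ℝ, HasDerivAt μ ((r : ℂ) * μ₀) 0 ∧ (((r : ℂ) * μ₀) / μ 0).im = 0 := by
  set B := ketBraBasis hortho
  set phase : Fin d × Fin d → ℂ := fun p =>
    Complex.exp (Complex.I * lam p.1) * star (Complex.exp (Complex.I * lam p.2))
  have hphase : μ₀ = phase (a, b) := by
    simp only [hμ₀, phase, Complex.star_def, ← Complex.exp_conj, ← Complex.exp_add, map_mul,
      Complex.conj_I, Complex.conj_ofReal]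
    ring_nf
  set s : ℝ → Fin d × Fin d → Fin d × Fin d → ℂ := fun ε p q =>
    ∑ k, trace ((ketBra φ p)ᴴ * (E k ε * ketBra φ q * E k ε))
  have hA : ∀ ε p q, LinearMap.toMatrix B B (N ε) p q = s ε p q * phase q := fun ε =>
    toMatrix_ketBraBasis_apply_of_kraus hortho hspec (hN ε)
  have hs : ∀ p q, DifferentiableAt ℝ (fun ε => s ε p q) 0 := fun p q =>
    .fun_sum fun k _ => differentiableAt_trace_mul_mul_mul_mul (hdiff k) _ _
  have h𝒰B : ∀ p, 𝒰 (B p) = phase p • B p := fun p => by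
    simp [B, h𝒰, mul_ketBra_mul_conjTranspose hortho hspec, phase]
  have hA₀ : LinearMap.toMatrix B B (N 0) = diagonal phase := by
    rw [show N 0 = 𝒰 from LinearMap.ext fun ρ => by rw [hN, hE0, h𝒰]]
    exact LinearMap.toMatrix_eq_diagonal B h𝒰B
  have hsimple : ∀ q ≠ (a, b), phase q ≠ phase (a, b) := fun q hq hq' =>
    hq (Module.End.eq_of_finrank_maxGenEigenspace_eq_one B (hphase ▸ hmult) (hq' ▸ h𝒰B q)
      (h𝒰B (a, b)))
  have hμ' := hasDerivAt_of_isRoot_charpoly (A := fun ε => LinearMap.toMatrix B B (N ε))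
    (fun p q => by simpa only [hA] using (hs p q).mul_const (phase q)) hA₀ hsimple hcont
    (hμ0.trans hphase) <| heig.mono fun ε h => by
      rwa [LinearMap.charpoly_toMatrix, ← Module.End.hasEigenvalue_iff_isRoot_charpoly]
  obtain ⟨r, hr⟩ : ∃ r : ℝ, HasDerivAt (fun ε => s ε (a, b) (a, b)) r 0 :=
    ⟨_, (hs _ _).hasDerivAt.ofReal_re_of_forall_im_eq_zero fun ε => by
      simp [s, Complex.im_sum, IsHermitian.im_trace_conjTranspose_mul_mul_mul_self (hherm _ ε)]⟩
  refine ⟨r, ?_, ?_⟩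
  · rw [hphase]
    simpa only [hA, (hr.mul_const _).deriv] using hμ'
  · rw [hμ0, mul_div_cancel_right₀ _ (hμ₀ ▸ Complex.exp_ne_zero _)]
    simp

/-- Theorem 1 of the paper: Let `U = ∑ a, e^{iλ_a}|φ_a⟩⟨φ_a|` be unitary
(`{φ_a}` orthonormal basis, `λ_a ∈ ℝ`) with channel `𝒰(ρ) = U ρ U†`. Fix indices
`a, b` and suppose `μ₀ = e^{i(λ_a − λ_b)}` is an eigenvalue of `𝒰` of algebraic
multiplicity one. For each `ε ∈ ℝ` let `ℰ_ε(ρ) = ∑ k, E_k(ε) ρ E_k(ε)` with each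
`E_k(ε)` Hermitian, each `ε ↦ E_k(ε)` differentiable at `0`, and `ℰ_0` the identity.
If `μ : ℝ → ℂ` is continuous at `0`, `μ 0 = μ₀`, and `μ ε` is an eigenvalue of the
noisy channel `ℰ_ε ∘ 𝒰` for `ε` in a neighborhood of `0`, then `μ` is differentiable
at `0` with `μ'(0) = r • μ₀` for some real `r`; in particular
`Im(μ'(0)/μ(0)) = 0`, i.e. the phase is unchanged to first order. -/
theorem hermitian_kraus_noise_keeps_phase_to_first_order
    {d m : ℕ}
    (U : Matrix (Fin d) (Fin d) ℂ) (hU : U ∈ Matrix.unitaryGroup (Fin d) ℂ)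
    (φ : Fin d → (Fin d → ℂ)) (lam : Fin d → ℝ)
    (hortho : ∀ a b : Fin d, star (φ a) ⬝ᵥ φ b = if a = b then 1 else 0)
    (hspan : Submodule.span ℂ (Set.range φ) = ⊤)
    (hspec : U = ∑ a : Fin d,
      Complex.exp (Complex.I * (lam a : ℂ)) • vecMulVec (φ a) (star (φ a)))
    (a b : Fin d) (μ₀ : ℂ)
    (hμ₀ : μ₀ = Complex.exp (Complex.I * ((lam a : ℂ) - (lam b : ℂ))))
    (𝒰 : Module.End ℂ (Matrix (Fin d) (Fin d) ℂ))
    (h𝒰 : ∀ ρ, 𝒰 ρ = U * ρ * Uᴴ)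
    (hμ₀eig : Module.End.HasEigenvalue 𝒰 μ₀)
    (hmult : Module.finrank ℂ (Module.End.maxGenEigenspace 𝒰 μ₀) = 1)
    (E : Fin m → ℝ → Matrix (Fin d) (Fin d) ℂ)
    (hherm : ∀ k ε, (E k ε)ᴴ = E k ε)
    (hdiff : ∀ k (i j : Fin d), DifferentiableAt ℝ (fun ε => E k ε i j) 0)
    (hE0 : ∀ ρ : Matrix (Fin d) (Fin d) ℂ, ∑ k : Fin m, E k 0 * ρ * E k 0 = ρ)
    (N : ℝ → Module.End ℂ (Matrix (Fin d) (Fin d) ℂ))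
    (hN : ∀ ε ρ, N ε ρ = ∑ k : Fin m, E k ε * (U * ρ * Uᴴ) * E k ε)
    (μ : ℝ → ℂ) (hcont : ContinuousAt μ 0) (hμ0 : μ 0 = μ₀)
    (heig : ∀ᶠ ε in nhds 0, Module.End.HasEigenvalue (N ε) (μ ε)) :
    ∃ r : ℝ, HasDerivAt μ ((r : ℂ) * μ₀) 0 ∧ (((r : ℂ) * μ₀) / μ 0).im = 0 :=
  hermitian_kraus_noise_keeps_phase_to_first_order_general U φ lam hortho hspec a b μ₀ hμ₀ 𝒰 h𝒰
    hmult E hherm hdiff hE0 N hN μ hcont hμ0 heig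
end
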